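/- arXiv:astro-ph/0306571 — 2 statements merged into one kernel-verified Lean document; each statement's English description precedes it below -/
import Mathlib

section
/- Let P0 > 0 and let x, h, g be differentiable functions with g'(x̃) = h'(x(x̃)) for all x̃, and h'(x(x̃)) = (x(x̃) - x̃) / (S(x̃) + g(x̃) - h(x(x̃))) where S(x̃) = sqrt((x̃ - x(x̃))² + (g(x̃) - h(x(x̃)))²) and the denominator is nonzero. Then the optical path length P(x̃) = S(x̃) + g(x̃) - h(x(x̃)) has zero derivative, i.e., is constant. -/
open Real

/-!
Write `a = x̃ - x(x̃)`, `b = g(x̃) - h(x(x̃))`, so that `S = √(a² + b²)` and `P = S + b`.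
Parallelism `g' = h'` gives `b' = h' a'`, hence `P' = a' (a + h' (S + b)) / S`, and Snell's law
`h' (S + b) = -a` makes the bracket vanish.
-/

theorem sq_add_sq_ne_zero_of_sqrt_add_ne_zero {a b : ℝ} (h : √(a ^ 2 + b ^ 2) + b ≠ 0) :
    a ^ 2 + b ^ 2 ≠ 0 := by
  intro hab
  have hb : b = 0 := by nlinarith [sq_nonneg a, sq_nonneg b]
  rw [hab, hb, Real.sqrt_zero, add_zero] at h
  exact h rfl

theorem HasDerivAt.sqrt_sq_add_sq {u v : ℝ → ℝ} {u' v' t : ℝ} (hu : HasDerivAt u u' t)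
    (hv : HasDerivAt v v' t) (hne : u t ^ 2 + v t ^ 2 ≠ 0) :
    HasDerivAt (fun s => √(u s ^ 2 + v s ^ 2))
      ((u t * u' + v t * v') / √(u t ^ 2 + v t ^ 2)) t := by
  refine (((hu.fun_pow 2).fun_add (hv.fun_pow 2)).sqrt hne).congr_deriv ?_
  field_simp
  push_cast
  ring

theorem HasDerivAt.sqrt_sq_add_sq_add_eq_zero {u v : ℝ → ℝ} {u' m t : ℝ}
    (hu : HasDerivAt u u' t) (hv : HasDerivAt v (m * u') t)
    (hne : √(u t ^ 2 + v t ^ 2) + v t ≠ 0) (hm : m * (√(u t ^ 2 + v t ^ 2) + v t) = -u t) :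
    HasDerivAt (fun s => √(u s ^ 2 + v s ^ 2) + v s) 0 t := by
  have hq := sq_add_sq_ne_zero_of_sqrt_add_ne_zero hne
  have hS : √(u t ^ 2 + v t ^ 2) ≠ 0 :=
    Real.sqrt_ne_zero'.mpr <| lt_of_le_of_ne (by positivity) hq.symm
  refine ((hu.sqrt_sq_add_sq hv hq).fun_add hv).congr_deriv ?_
  field_simp
  linear_combination u' * hm

theorem optical_path_length_conserved_general
    (x h g S : ℝ → ℝ)
    (hx : Differentiable ℝ x) (hh : Differentiable ℝ h) (hg : Differentiable ℝ g)
    (hS : ∀ t, S t = Real.sqrt ((t - x t) ^ 2 + (g t - h (x t)) ^ 2))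
    (hden : ∀ t, S t + g t - h (x t) ≠ 0)
    (hsnell : ∀ t, deriv h (x t) = (x t - t) / (S t + g t - h (x t)))
    (hpar : ∀ t, deriv g t = deriv h (x t)) :
    ∀ t, deriv (fun s => S s + g s - h (x s)) t = 0 := by
  intro t
  have hP : (fun s => S s + g s - h (x s)) =
      fun s => √((s - x s) ^ 2 + (g s - h (x s)) ^ 2) + (g s - h (x s)) := by
    funext s
    rw [hS s, add_sub_assoc]
  have ha : HasDerivAt (fun s => s - x s) (1 - deriv x t) t :=
    (hasDerivAt_id t).sub (hx t).hasDerivAt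
  have hb : HasDerivAt (fun s => g s - h (x s)) (deriv h (x t) * (1 - deriv x t)) t := by
    refine ((hg t).hasDerivAt.fun_sub
      ((hh (x t)).hasDerivAt.comp t (hx t).hasDerivAt)).congr_deriv ?_
    rw [hpar t]
    ring
  have hden' := hden t
  rw [hS t, add_sub_assoc] at hden'
  have hsnell' : deriv h (x t) * (√((t - x t) ^ 2 + (g t - h (x t)) ^ 2) + (g t - h (x t)))
      = -(t - x t) := by
    rw [hsnell t, hS t, add_sub_assoc, div_mul_cancel₀ _ hden']
    ring
  rw [hP]
  exact (ha.sqrt_sq_add_sq_add_eq_zero hb hden' hsnell').deriv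

/-- The optical path length `P(x̃) = S(x̃) + g(x̃) - h(x(x̃))` has zero
derivative (is constant) for on-axis rays, given Snell's law at the first mirror
and equality of the mirror slopes. -/
theorem optical_path_length_conserved
    (P0 : ℝ) (hP0 : 0 < P0)
    (x h g S : ℝ → ℝ)
    (hx : Differentiable ℝ x) (hh : Differentiable ℝ h) (hg : Differentiable ℝ g)
    (hS : ∀ t, S t = Real.sqrt ((t - x t) ^ 2 + (g t - h (x t)) ^ 2))
    (hden : ∀ t, S t + g t - h (x t) ≠ 0)
    (hsnell : ∀ t, deriv h (x t) = (x t - t) / (S t + g t - h (x t)))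
    (hpar : ∀ t, deriv g t = deriv h (x t)) :
    ∀ t, deriv (fun s => S s + g s - h (x s)) t = 0 :=
  optical_path_length_conserved_general x h g S hx hh hg hS hden hsnell hpar
end

section
/- If the apodization function A is a positive constant A ≠ 1, so that x(x̃) = x₀ + A·x̃, and the mirror slopes satisfy h'(x) = (x - x̃(x))/P0 with x̃(x) = (x - x₀)/A, and g'(x̃) = (x(x̃) - x̃)/P0, then both mirrors are parabolic: h(x) = c_h + (x - ξ)²/(4H) and g(x̃) = c_g + (x̃ - ξ)²/(4G) with ξ = -x₀/(A-1), H = A·P0/(2(A-1)), G = P0/(2(A-1)); in particular H = A·G. -/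
/-!
For a constant apodization both slope equations have an affine right-hand side vanishing at the
common point `ξ = -x₀/(A-1)`, so each mirror differs from the parabola with vertex abscissa `ξ`
and the same slope by a function of zero derivative, i.e. by a constant.
-/

theorem hasDerivAt_sq_sub_div (ξ H t : ℝ) :
    HasDerivAt (fun s : ℝ => (s - ξ) ^ 2 / (4 * H)) ((t - ξ) / (2 * H)) t :=
  ((((hasDerivAt_id' t).sub_const ξ).fun_pow 2).div_const (4 * H)).congr_deriv (by ring)

/-- With `H = 0` both sides degenerate consistently (`x / 0 = 0`): `f` is then constant. -/
theorem eq_add_sq_sub_div_of_deriv_eq {f : ℝ → ℝ} {ξ H : ℝ} (hf : Differentiable ℝ f)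
    (hf' : ∀ t, deriv f t = (t - ξ) / (2 * H)) (t : ℝ) :
    f t = f ξ + (t - ξ) ^ 2 / (4 * H) := by
  have hconst := is_const_of_deriv_eq_zero
    (hf.sub fun s => (hasDerivAt_sq_sub_div ξ H s).differentiableAt)
    (fun s => by
      rw [deriv_sub (hf s) (hasDerivAt_sq_sub_div ξ H s).differentiableAt, hf',
        (hasDerivAt_sq_sub_div ξ H s).deriv, sub_self]) t ξ
  simp only [Pi.sub_apply, sub_self, ne_eq, OfNat.ofNat_ne_zero, not_false_eq_true, zero_pow,
    zero_div, sub_zero] at hconst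
  linarith

section ConstantApodization

variable {P0 A x₀ : ℝ}

theorem primary_slope_eq (hA : A ≠ 0) (hA1 : A ≠ 1) (t : ℝ) :
    (t - (t - x₀) / A) / P0 = (t - -x₀ / (A - 1)) / (2 * (A * P0 / (2 * (A - 1)))) := by
  have hA1' : A - 1 ≠ 0 := sub_ne_zero.mpr hA1
  field_simp
  ring

theorem secondary_slope_eq (hA1 : A ≠ 1) (t : ℝ) :
    ((x₀ + A * t) - t) / P0 = (t - -x₀ / (A - 1)) / (2 * (P0 / (2 * (A - 1)))) := by
  have hA1' : A - 1 ≠ 0 := sub_ne_zero.mpr hA1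
  field_simp
  ring

end ConstantApodization

theorem constant_apodization_parabolic_mirrors_general
    (P0 A x₀ : ℝ) (hA : 0 < A) (hA1 : A ≠ 1)
    (h g : ℝ → ℝ)
    (hhd : Differentiable ℝ h) (hgd : Differentiable ℝ g)
    (hh : ∀ t, deriv h t = (t - (t - x₀) / A) / P0)
    (hg : ∀ t, deriv g t = ((x₀ + A * t) - t) / P0) :
    ∃ cₕ c_g : ℝ,
      (∀ t, h t = cₕ + (t - (-x₀ / (A - 1))) ^ 2 / (4 * (A * P0 / (2 * (A - 1))))) ∧
      (∀ t, g t = c_g + (t - (-x₀ / (A - 1))) ^ 2 / (4 * (P0 / (2 * (A - 1))))) ∧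
      A * P0 / (2 * (A - 1)) = A * (P0 / (2 * (A - 1))) :=
  ⟨h (-x₀ / (A - 1)), g (-x₀ / (A - 1)),
    eq_add_sq_sub_div_of_deriv_eq hhd fun t => (hh t).trans (primary_slope_eq hA.ne' hA1 t),
    eq_add_sq_sub_div_of_deriv_eq hgd fun t => (hg t).trans (secondary_slope_eq hA1 t),
    mul_div_assoc A P0 _⟩

/-- For a constant apodization `A ≠ 1`, the decoupled mirror slope
equations force both mirrors to be parabolic, with focal lengths
`H = A·P0/(2(A-1))`, `G = P0/(2(A-1))` (so `H = A·G`) and common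
centerline `ξ = -x₀/(A-1)`. -/
theorem constant_apodization_parabolic_mirrors
    (P0 A x₀ : ℝ) (hP0 : 0 < P0) (hA : 0 < A) (hA1 : A ≠ 1)
    (h g : ℝ → ℝ)
    (hhd : Differentiable ℝ h) (hgd : Differentiable ℝ g)
    (hh : ∀ t, deriv h t = (t - (t - x₀) / A) / P0)
    (hg : ∀ t, deriv g t = ((x₀ + A * t) - t) / P0) :
    ∃ cₕ c_g : ℝ,
      (∀ t, h t = cₕ + (t - (-x₀ / (A - 1))) ^ 2 / (4 * (A * P0 / (2 * (A - 1))))) ∧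
      (∀ t, g t = c_g + (t - (-x₀ / (A - 1))) ^ 2 / (4 * (P0 / (2 * (A - 1))))) ∧
      A * P0 / (2 * (A - 1)) = A * (P0 / (2 * (A - 1))) :=
  constant_apodization_parabolic_mirrors_general P0 A x₀ hA hA1 h g hhd hgd hh hg
end
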